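/- If a sequence (𝒟_m)_{m∈ℕ} of gradient discretisations is compact, then it is coercive, i.e. sup_{m∈ℕ} C_{𝒟_m} < ∞. -/

import Mathlib

open NormedSpace Filter Topology

noncomputable section

variable {L Lv : Type*} [NormedAddCommGroup L] [NormedSpace ℝ L]
  [NormedAddCommGroup Lv] [NormedSpace ℝ Lv]

/-- The seminorm `|u|_{L,V} = sup_{μ ∈ V \ {0}} |⟨μ,u⟩| / ‖μ‖` (equal to `0` when `V = {0}`,
since `sSup ∅ = 0` in `ℝ`). -/
noncomputable def semV (V : Submodule ℝ (StrongDual ℝ L)) (u : L) : ℝ :=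
  sSup ((fun μ : StrongDual ℝ L => |μ u| / ‖μ‖) '' {μ : StrongDual ℝ L | μ ∈ V ∧ μ ≠ 0})

/-- `IsWDpair W_G G φ w` says that `φ ∈ 𝐖_D` with `D φ = w`, i.e. the abstract Stokes formula
`⟨φ, G u⟩ + ⟨w, u⟩ = 0` holds for all `u ∈ W_G`. -/
def IsWDpair (WG : Submodule ℝ L) (G : ↥WG →ₗ[ℝ] Lv) (φ : StrongDual ℝ Lv) (w : StrongDual ℝ L) : Prop :=
  ∀ u : ↥WG, φ (G u) + w (u : L) = 0

/-- A gradient discretisation `𝒟 = (X_𝒟, P_𝒟, G_𝒟)`: a finite-dimensional real vector space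
`X`, a function reconstruction `P : X → L` and a gradient reconstruction `Gd : X → Lv`, such
that `v ↦ (|P v|_{L,V}^p + ‖Gd v‖^p)^{1/p}` is a norm on `X` (definiteness is the only
non-automatic condition). -/
structure GradDisc (L Lv : Type*) [NormedAddCommGroup L] [NormedSpace ℝ L]
    [NormedAddCommGroup Lv] [NormedSpace ℝ Lv]
    (V : Submodule ℝ (StrongDual ℝ L)) (p : ℝ) where
  X : Type
  [instAddCommGroup : AddCommGroup X]
  [instModule : Module ℝ X]
  [instFin : FiniteDimensional ℝ X]
  P : X →ₗ[ℝ] L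
  Gd : X →ₗ[ℝ] Lv
  dnorm_definite : ∀ v : X, (semV V (P v) ^ p + ‖Gd v‖ ^ p) ^ (1 / p) = 0 → v = 0

attribute [instance] GradDisc.instAddCommGroup GradDisc.instModule GradDisc.instFin

namespace GradDisc

variable {V : Submodule ℝ (StrongDual ℝ L)} {p : ℝ}

/-- The discrete norm `‖v‖_𝒟 = (|P_𝒟 v|_{L,V}^p + ‖G_𝒟 v‖_Lv^p)^{1/p}`. -/
noncomputable def dnorm (D : GradDisc L Lv V p) (v : D.X) : ℝ :=
  (semV V (D.P v) ^ p + ‖D.Gd v‖ ^ p) ^ (1 / p)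

/-- `C_𝒟 = max_{v ≠ 0} ‖P_𝒟 v‖_L / ‖v‖_𝒟`. -/
noncomputable def CD (D : GradDisc L Lv V p) : ℝ :=
  sSup ((fun v : D.X => ‖D.P v‖ / D.dnorm v) '' {v : D.X | v ≠ 0})

/-- `W_𝒟(φ) = sup_{u ≠ 0} |⟨φ, G_𝒟 u⟩ + ⟨D φ, P_𝒟 u⟩| / ‖u‖_𝒟`, where `w = D φ`. -/
noncomputable def WDdef (D : GradDisc L Lv V p) (φ : StrongDual ℝ Lv) (w : StrongDual ℝ L) : ℝ :=
  sSup ((fun u : D.X => |φ (D.Gd u) + w (D.P u)| / D.dnorm u) '' {u : D.X | u ≠ 0})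

/-- `S_𝒟(φ) = min_v (‖P_𝒟 v − φ‖_L + ‖G_𝒟 v − G φ‖_Lv)`, where `gφ = G φ`. -/
noncomputable def SDdef (D : GradDisc L Lv V p) (φ : L) (gφ : Lv) : ℝ :=
  sInf (Set.range fun v : D.X => ‖D.P v - φ‖ + ‖D.Gd v - gφ‖)

end GradDisc

/-- Coercivity of a sequence of gradient discretisations: `sup_m C_{𝒟_m} < ∞`. -/
def Coercive {V : Submodule ℝ (StrongDual ℝ L)} {p : ℝ} (D : ℕ → GradDisc L Lv V p) : Prop :=
  ∃ C : ℝ, ∀ m : ℕ, (D m).CD ≤ C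

/-- Limit-conformity: `W_{𝒟_m}(φ) → 0` for every `φ ∈ 𝐖_D` (with `w = D φ`). -/
def LimitConforming (WG : Submodule ℝ L) (G : ↥WG →ₗ[ℝ] Lv)
    {V : Submodule ℝ (StrongDual ℝ L)} {p : ℝ} (D : ℕ → GradDisc L Lv V p) : Prop :=
  ∀ (φ : StrongDual ℝ Lv) (w : StrongDual ℝ L), IsWDpair WG G φ w →
    Filter.Tendsto (fun m => (D m).WDdef φ w) Filter.atTop (𝓝 0)

/-- Consistency: `S_{𝒟_m}(φ) → 0` for every `φ ∈ W_G`. -/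
def Consistent (WG : Submodule ℝ L) (G : ↥WG →ₗ[ℝ] Lv)
    {V : Submodule ℝ (StrongDual ℝ L)} {p : ℝ} (D : ℕ → GradDisc L Lv V p) : Prop :=
  ∀ u : ↥WG, Filter.Tendsto (fun m => (D m).SDdef (u : L) (G u)) Filter.atTop (𝓝 0)

/-- Compactness: bounded discrete sequences have relatively compact reconstructions in `L`. -/
def CompactSeq {V : Submodule ℝ (StrongDual ℝ L)} {p : ℝ} (D : ℕ → GradDisc L Lv V p) : Prop :=
  ∀ u : (m : ℕ) → (D m).X, (∃ C : ℝ, ∀ m : ℕ, (D m).dnorm (u m) ≤ C) →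
    IsCompact (closure (Set.range fun m => (D m).P (u m)))


/-! The ratio `‖P_𝒟 v‖ / ‖v‖_𝒟` is invariant under scaling, so on the finite-dimensional space
`X_𝒟` its supremum `C_𝒟` is attained at some `w_𝒟` with `‖w_𝒟‖_𝒟 ≤ 1`. Compactness of the sequence
makes `(P_{𝒟_m} w_{𝒟_m})_m` relatively compact, hence bounded in `L`, and that bound controls
every `C_{𝒟_m} ≤ ‖P_{𝒟_m} w_{𝒟_m}‖_L`. -/

theorem exists_forall_le_mul_of_homogeneous {E : Type*} [NormedAddCommGroup E] [NormedSpace ℝ E]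
    [FiniteDimensional ℝ E] {f N : E → ℝ} (hf : Continuous f) (hN : Continuous N)
    (hf_smul : ∀ t : ℝ, 0 ≤ t → ∀ x, f (t • x) = t * f x)
    (hN_smul : ∀ t : ℝ, 0 ≤ t → ∀ x, N (t • x) = t * N x)
    (hN_pos : ∀ x, x ≠ 0 → 0 < N x) :
    ∃ w, N w ≤ 1 ∧ ∀ v, f v ≤ f w * N v := by
  have hf0 : f 0 = 0 := by simpa using hf_smul 0 le_rfl 0
  have hN0 : N 0 = 0 := by simpa using hN_smul 0 le_rfl 0
  rcases subsingleton_or_nontrivial E with _ | _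
  · exact ⟨0, by simp [hN0], fun v => by simp [Subsingleton.elim v 0, hf0, hN0]⟩
  have hN_ne : ∀ x ∈ Metric.sphere (0 : E) 1, N x ≠ 0 := fun x hx =>
    (hN_pos x (Metric.ne_of_mem_sphere hx one_ne_zero)).ne'
  obtain ⟨x₀, hx₀S, hx₀⟩ := (isCompact_sphere (0 : E) 1).exists_isMaxOn
    (NormedSpace.sphere_nonempty.2 zero_le_one) (hf.continuousOn.div hN.continuousOn hN_ne)
  have hNx₀ : 0 < N x₀ := hN_pos x₀ (Metric.ne_of_mem_sphere hx₀S one_ne_zero)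
  have hratio : ∀ v, f v ≤ f x₀ / N x₀ * N v := by
    intro v
    rcases eq_or_ne v 0 with rfl | hv
    · simp [hf0, hN0]
    have hv' : ‖v‖⁻¹ ≠ 0 := inv_ne_zero (norm_ne_zero_iff.2 hv)
    have hu : ‖v‖⁻¹ • v ∈ Metric.sphere (0 : E) 1 := by simp [norm_smul, hv]
    have hmax : f (‖v‖⁻¹ • v) / N (‖v‖⁻¹ • v) ≤ f x₀ / N x₀ := hx₀ hu
    rw [hf_smul _ (by positivity), hN_smul _ (by positivity), mul_div_mul_left _ _ hv'] at hmax
    exact (div_le_iff₀ (hN_pos v hv)).1 hmax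
  refine ⟨(N x₀)⁻¹ • x₀, ?_, ?_⟩
  · rw [hN_smul _ (inv_nonneg.2 hNx₀.le), inv_mul_cancel₀ hNx₀.ne']
  · rwa [hf_smul _ (inv_nonneg.2 hNx₀.le), inv_mul_eq_div]

section Seminorm

variable (V : Submodule ℝ (StrongDual ℝ L))

theorem abs_apply_div_opNorm_le (μ : StrongDual ℝ L) (u : L) : |μ u| / ‖μ‖ ≤ ‖u‖ :=
  div_le_of_le_mul₀ (norm_nonneg μ) (norm_nonneg u) (by
    simpa only [Real.norm_eq_abs, mul_comm ‖u‖] using μ.le_opNorm u)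

theorem semV_bddAbove (u : L) :
    BddAbove ((fun μ : StrongDual ℝ L => |μ u| / ‖μ‖) '' {μ | μ ∈ V ∧ μ ≠ 0}) :=
  ⟨‖u‖, by rintro _ ⟨μ, -, rfl⟩; exact abs_apply_div_opNorm_le μ u⟩

theorem semV_nonneg (u : L) : 0 ≤ semV V u :=
  Real.sSup_nonneg (by rintro _ ⟨μ, -, rfl⟩; positivity)

theorem semV_le_norm (u : L) : semV V u ≤ ‖u‖ :=
  Real.sSup_le (by rintro _ ⟨μ, -, rfl⟩; exact abs_apply_div_opNorm_le μ u) (norm_nonneg u)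

theorem semV_add_le (u v : L) : semV V (u + v) ≤ semV V u + semV V v := by
  refine Real.sSup_le ?_ (add_nonneg (semV_nonneg V u) (semV_nonneg V v))
  rintro _ ⟨μ, hμ, rfl⟩
  calc |μ (u + v)| / ‖μ‖ ≤ |μ u| / ‖μ‖ + |μ v| / ‖μ‖ := by
        rw [map_add, ← add_div]
        exact div_le_div_of_nonneg_right (abs_add_le _ _) (norm_nonneg μ)
    _ ≤ semV V u + semV V v :=
        add_le_add (le_csSup (semV_bddAbove V u) ⟨μ, hμ, rfl⟩)
          (le_csSup (semV_bddAbove V v) ⟨μ, hμ, rfl⟩)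

theorem semV_smul (c : ℝ) (u : L) : semV V (c • u) = |c| * semV V u := by
  have h : (fun μ : StrongDual ℝ L => |μ (c • u)| / ‖μ‖)
      = (fun r : ℝ => |c| • r) ∘ fun μ : StrongDual ℝ L => |μ u| / ‖μ‖ := by
    funext μ
    simp [abs_mul, mul_div_assoc]
  rw [semV, semV, h, Set.image_comp, Set.image_smul,
    Real.sSup_smul_of_nonneg (abs_nonneg c), smul_eq_mul]

theorem lipschitzWith_semV : LipschitzWith 1 (semV V) :=
  LipschitzWith.of_le_add fun u v => by
    simpa [dist_eq_norm, add_comm] using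
      (semV_add_le V (u - v) v).trans (add_le_add_left (semV_le_norm V (u - v)) _)

end Seminorm

namespace GradDisc

variable {V : Submodule ℝ (StrongDual ℝ L)} {p : ℝ} (D : GradDisc L Lv V p)

theorem dnorm_nonneg (v : D.X) : 0 ≤ D.dnorm v := by
  have := semV_nonneg V (D.P v)
  unfold dnorm
  positivity

theorem dnorm_pos {v : D.X} (hv : v ≠ 0) : 0 < D.dnorm v :=
  (D.dnorm_nonneg v).lt_of_ne fun h => hv (D.dnorm_definite v h.symm)

theorem dnorm_smul (hp : 0 < p) (c : ℝ) (v : D.X) : D.dnorm (c • v) = |c| * D.dnorm v := by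
  have hc := abs_nonneg c
  have ha := semV_nonneg V (D.P v)
  have hb := norm_nonneg (D.Gd v)
  rw [dnorm, dnorm, map_smul, map_smul, semV_smul, norm_smul, Real.norm_eq_abs,
    Real.mul_rpow hc ha, Real.mul_rpow hc hb, ← mul_add, Real.mul_rpow (by positivity) (by positivity),
    one_div, Real.rpow_rpow_inv hc hp.ne']

theorem continuous_dnorm_comp (hp : 0 < p) {E : Type*} [NormedAddCommGroup E] [NormedSpace ℝ E]
    [FiniteDimensional ℝ E] (g : E →ₗ[ℝ] D.X) : Continuous fun x => D.dnorm (g x) := by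
  have hP := ((lipschitzWith_semV V).continuous.comp (D.P ∘ₗ g).continuous_of_finiteDimensional)
  have hG := (D.Gd ∘ₗ g).continuous_of_finiteDimensional.norm
  exact ((hP.rpow_const fun _ => Or.inr hp.le).add (hG.rpow_const fun _ => Or.inr hp.le)).rpow_const
    fun _ => Or.inr (by positivity)

theorem exists_norm_P_le_mul_dnorm (hp : 0 < p) :
    ∃ w, D.dnorm w ≤ 1 ∧ ∀ v, ‖D.P v‖ ≤ ‖D.P w‖ * D.dnorm v := by
  let e := (Module.finBasis ℝ D.X).equivFun
  obtain ⟨w, hw1, hw⟩ := exists_forall_le_mul_of_homogeneous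
    (f := fun x => ‖D.P (e.symm x)‖) (N := fun x => D.dnorm (e.symm x))
    (D.P ∘ₗ e.symm.toLinearMap).continuous_of_finiteDimensional.norm
    (D.continuous_dnorm_comp hp e.symm.toLinearMap)
    (fun t ht x => by simp [norm_smul, abs_of_nonneg ht])
    (fun t ht x => by simp [D.dnorm_smul hp, abs_of_nonneg ht])
    (fun x hx => D.dnorm_pos (by simpa using hx))
  exact ⟨e.symm w, hw1, fun v => by simpa using hw (e v)⟩

theorem CD_le {C : ℝ} (hC : 0 ≤ C) (h : ∀ v, ‖D.P v‖ ≤ C * D.dnorm v) : D.CD ≤ C :=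
  Real.sSup_le (by rintro _ ⟨v, -, rfl⟩; exact div_le_of_le_mul₀ (D.dnorm_nonneg v) hC (h v)) hC

end GradDisc

theorem compact_implies_coercive_general
    (p : ℝ) (hp : 1 < p)
    (V : Submodule ℝ (StrongDual ℝ L))
    (D : ℕ → GradDisc L Lv V p)
    (hcomp : CompactSeq D) :
    Coercive D := by
  choose w hw1 hw using fun m => (D m).exists_norm_P_le_mul_dnorm (zero_lt_one.trans hp)
  obtain ⟨C, hC⟩ := isBounded_iff_forall_norm_le.mp (hcomp w ⟨1, hw1⟩).isBounded
  refine ⟨max C 0, fun m => (D m).CD_le (le_max_right C 0) fun v => (hw m v).trans ?_⟩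
  exact mul_le_mul_of_nonneg_right ((hC _ (subset_closure ⟨m, rfl⟩)).trans (le_max_left C 0))
    ((D m).dnorm_nonneg v)

theorem compact_implies_coercive
    [CompleteSpace L] [CompleteSpace Lv]
    [TopologicalSpace.SeparableSpace L] [TopologicalSpace.SeparableSpace Lv]
    (hreflL : Function.Surjective ⇑(inclusionInDoubleDual ℝ L))
    (hreflLv : Function.Surjective ⇑(inclusionInDoubleDual ℝ Lv))
    (WG : Submodule ℝ L) (hWGdense : Dense (WG : Set L))
    (G : ↥WG →ₗ[ℝ] Lv)
    (hGclosed : IsClosed (Set.range fun u : ↥WG => ((u : L), G u)))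
    (p : ℝ) (hp : 1 < p)
    (V : Submodule ℝ (StrongDual ℝ L)) (hVclosed : IsClosed (V : Set (StrongDual ℝ L)))
    (CWGV : ℝ) (hCWGV : 0 < CWGV)
    (hequiv : ∀ u : ↥WG, (‖(u : L)‖ ^ p + ‖G u‖ ^ p) ^ (1 / p) ≤
      CWGV * (semV V (u : L) ^ p + ‖G u‖ ^ p) ^ (1 / p))
    (D : ℕ → GradDisc L Lv V p)
    (hcomp : CompactSeq D) :
    Coercive D :=
  compact_implies_coercive_general p hp V D hcomp
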